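/- Convergence of upper-bound iteration: suppose each node v of a graph G is assigned a value c̄(v) with c̄(v) ≥ core(v), and consider the operator that replaces c̄(v) by the largest k such that at least k neighbors u of v satisfy c̄(u) ≥ k. Then (a) after applying the operator, c̄(v) ≥ core(v) still holds for all v, and (b) iterating this operator (in any order covering all nodes repeatedly) reaches a fixed point where c̄(v) = core(v) for all v. -/
import Mathlib

variable {V : Type*} [Fintype V]

/-- The k-core of `G`, as the set of vertices contained in some subgraph
(vertex set) in which every vertex has at least `k` neighbors inside the set. -/
def coreSet (G : SimpleGraph V) (k : ℕ) : Set V :=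
  {v | ∃ S : Set V, v ∈ S ∧ ∀ u ∈ S, k ≤ (S ∩ G.neighborSet u).ncard}

/-- The core number of `v`: the largest `k` such that `v` belongs to the `k`-core. -/
noncomputable def coreNumber (G : SimpleGraph V) (v : V) : ℕ :=
  sSup {k | v ∈ coreSet G k}

/-- The local update operator: the largest `k` such that at least `k` neighbors `u`
of `v` satisfy `k ≤ c u`. -/
noncomputable def localUpdate (G : SimpleGraph V) (c : V → ℕ) (v : V) : ℕ :=
  sSup {k | k ≤ {u ∈ G.neighborSet v | k ≤ c u}.ncard}

lemma aux_ncard_le_card (s : Set V) : s.ncard ≤ Fintype.card V := by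
  have := Set.ncard_le_ncard (Set.subset_univ s) Set.finite_univ
  simpa [Set.ncard_univ, Nat.card_eq_fintype_card] using this

lemma aux_bddB (G : SimpleGraph V) (c : V → ℕ) (v : V) :
    BddAbove {k | k ≤ {u ∈ G.neighborSet v | k ≤ c u}.ncard} :=
  ⟨Fintype.card V, fun k hk => le_trans hk (aux_ncard_le_card _)⟩

lemma aux_localUpdate_mem (G : SimpleGraph V) (c : V → ℕ) (v : V) :
    localUpdate G c v ≤ {u ∈ G.neighborSet v | localUpdate G c v ≤ c u}.ncard := by
  have h : localUpdate G c v ∈ {k | k ≤ {u ∈ G.neighborSet v | k ≤ c u}.ncard} :=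
    Nat.sSup_mem ⟨0, by simp⟩ (aux_bddB G c v)
  exact h

lemma aux_le_localUpdate (G : SimpleGraph V) (c : V → ℕ) (v : V) (k : ℕ)
    (hk : k ≤ {u ∈ G.neighborSet v | k ≤ c u}.ncard) : k ≤ localUpdate G c v :=
  le_csSup (aux_bddB G c v) hk

lemma aux_bddCore (G : SimpleGraph V) (v : V) :
    BddAbove {k | v ∈ coreSet G k} := by
  refine ⟨Fintype.card V, fun k hk => ?_⟩
  obtain ⟨S, hvS, hS⟩ := hk
  exact le_trans (hS v hvS) (aux_ncard_le_card _)

lemma aux_mem_coreSet_core (G : SimpleGraph V) (v : V) :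
    v ∈ coreSet G (coreNumber G v) := by
  have h : coreNumber G v ∈ {k | v ∈ coreSet G k} :=
    Nat.sSup_mem ⟨0, ⟨Set.univ, Set.mem_univ v, fun u _ => Nat.zero_le _⟩⟩ (aux_bddCore G v)
  exact h

lemma aux_le_coreNumber (G : SimpleGraph V) (v : V) (k : ℕ)
    (hk : v ∈ coreSet G k) : k ≤ coreNumber G v :=
  le_csSup (aux_bddCore G v) hk

/-- Part (a): if `c` dominates the core numbers, so does `localUpdate G c`. -/
lemma aux_core_le_update (G : SimpleGraph V) (c : V → ℕ)
    (hub : ∀ v, coreNumber G v ≤ c v) (v : V) :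
    coreNumber G v ≤ localUpdate G c v := by
  set k := coreNumber G v with hkdef
  obtain ⟨S, hvS, hS⟩ := aux_mem_coreSet_core G v
  apply aux_le_localUpdate
  have hsub : S ∩ G.neighborSet v ⊆ {u ∈ G.neighborSet v | k ≤ c u} := by
    rintro u ⟨huS, hunv⟩
    refine ⟨hunv, ?_⟩
    have hcore : k ≤ coreNumber G u := aux_le_coreNumber G u k ⟨S, huS, hS⟩
    exact le_trans hcore (hub u)
  calc k ≤ (S ∩ G.neighborSet v).ncard := hS v hvS
    _ ≤ _ := Set.ncard_le_ncard hsub (Set.toFinite _)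

/-- Monotonicity of the local update. -/
lemma aux_update_mono (G : SimpleGraph V) (c c' : V → ℕ) (h : ∀ v, c v ≤ c' v) (v : V) :
    localUpdate G c v ≤ localUpdate G c' v := by
  apply csSup_le_csSup (aux_bddB G c' v) ⟨0, by simp⟩
  intro k hk
  refine le_trans hk (Set.ncard_le_ncard ?_ (Set.toFinite _))
  rintro u ⟨h1, h2⟩
  exact ⟨h1, le_trans h2 (h u)⟩

/-- Any fixed point of the local update is dominated by the core numbers. -/
lemma aux_fixed_le_core (G : SimpleGraph V) (c : V → ℕ)
    (hfix : localUpdate G c = c) (v : V) : c v ≤ coreNumber G v := by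
  apply aux_le_coreNumber
  refine ⟨{u | c v ≤ c u}, by simp, ?_⟩
  intro u hu
  have h1 : c u ≤ {w ∈ G.neighborSet u | c u ≤ c w}.ncard := by
    have := aux_localUpdate_mem G c u
    rwa [hfix] at this
  have hsub : {w ∈ G.neighborSet u | c u ≤ c w} ⊆ {w | c v ≤ c w} ∩ G.neighborSet u := by
    rintro w ⟨h2, h3⟩
    exact ⟨le_trans hu h3, h2⟩
  calc c v ≤ c u := hu
    _ ≤ _ := h1
    _ ≤ _ := Set.ncard_le_ncard hsub (Set.toFinite _)

lemma aux_iter_mono (G : SimpleGraph V) (n : ℕ) : ∀ c c' : V → ℕ,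
    (∀ v, c v ≤ c' v) → ∀ v, (localUpdate G)^[n] c v ≤ (localUpdate G)^[n] c' v := by
  induction n with
  | zero => exact fun c c' h => h
  | succ n ih =>
    intro c c' h v
    simp only [Function.iterate_succ_apply]
    exact ih _ _ (aux_update_mono G c c' h) v

lemma aux_update_le_card (G : SimpleGraph V) (c : V → ℕ) (v : V) :
    localUpdate G c v ≤ Fintype.card V :=
  le_trans (aux_localUpdate_mem G c v) (aux_ncard_le_card _)

theorem stmt10 (G : SimpleGraph V) (c : V → ℕ)
    (hub : ∀ v, coreNumber G v ≤ c v) :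
    (∀ v, coreNumber G v ≤ localUpdate G c v) ∧
    (∃ n : ℕ, (localUpdate G)^[n] c = coreNumber G) := by
  classical
  refine ⟨aux_core_le_update G c hub, ?_⟩
  set m : V → ℕ := fun v => max (c v) (Fintype.card V) with hm
  have hcm : ∀ v, c v ≤ m v := fun v => le_max_left _ _
  have hLm : ∀ v, localUpdate G m v ≤ m v :=
    fun v => le_trans (aux_update_le_card G m v) (le_max_right _ _)
  -- iterates of m are pointwise antitone
  have hstep : ∀ n v, (localUpdate G)^[n+1] m v ≤ (localUpdate G)^[n] m v := by
    intro n v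
    have := aux_iter_mono G n (localUpdate G m) m hLm v
    simpa [Function.iterate_succ_apply] using this
  -- the iteration stabilizes
  have hstab : ∃ n, (localUpdate G)^[n+1] m = (localUpdate G)^[n] m := by
    by_contra hcon
    push_neg at hcon
    set g : ℕ → ℕ := fun n => ∑ v : V, (localUpdate G)^[n] m v with hg
    have hdec : ∀ n, g (n+1) < g n := by
      intro n
      have hne := hcon n
      have : ∃ v, (localUpdate G)^[n+1] m v ≠ (localUpdate G)^[n] m v := by
        by_contra h
        push_neg at h
        exact hne (funext h)
      obtain ⟨v, hv⟩ := this
      exact Finset.sum_lt_sum (fun i _ => hstep n i)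
        ⟨v, Finset.mem_univ v, lt_of_le_of_ne (hstep n v) hv⟩
    have hbound : ∀ n, g n + n ≤ g 0 := by
      intro n
      induction n with
      | zero => simp
      | succ n ih =>
        have := hdec n
        omega
    have := hbound (g 0 + 1)
    omega
  obtain ⟨n, hn⟩ := hstab
  -- the stabilized value is a fixed point
  have hfix : localUpdate G ((localUpdate G)^[n] m) = (localUpdate G)^[n] m :=
    (Function.iterate_succ_apply' (localUpdate G) n m).symm.trans hn
  -- core ≤ all iterates of m
  have hcorem : ∀ k v, coreNumber G v ≤ (localUpdate G)^[k] m v := by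
    intro k
    induction k with
    | zero => exact fun v => le_trans (hub v) (hcm v)
    | succ k ih =>
      intro v
      rw [Function.iterate_succ_apply' (localUpdate G) k m]
      exact aux_core_le_update G _ ih v
  have hmeq : (localUpdate G)^[n] m = coreNumber G := by
    funext v
    exact le_antisymm (aux_fixed_le_core G _ hfix v) (hcorem n v)
  -- core ≤ all iterates of c
  have hcorec : ∀ k v, coreNumber G v ≤ (localUpdate G)^[k] c v := by
    intro k
    induction k with
    | zero => exact hub
    | succ k ih =>
      intro v
      rw [Function.iterate_succ_apply' (localUpdate G) k c]
      exact aux_core_le_update G _ ih v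
  -- iterates of c ≤ iterates of m
  have hcm' : ∀ k v, (localUpdate G)^[k] c v ≤ (localUpdate G)^[k] m v :=
    fun k => aux_iter_mono G k c m hcm
  refine ⟨n, funext fun v => le_antisymm ?_ (hcorec n v)⟩
  calc (localUpdate G)^[n] c v ≤ (localUpdate G)^[n] m v := hcm' n v
    _ = coreNumber G v := by rw [hmeq]
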